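/- Let n ≥ 1 and let A, X be n×n complex matrices such that exp(XA − AX) = X, where exp is the matrix exponential. Then the matrix C := XA − AX is nilpotent, X − I_n is nilpotent, and Σ_{k=1}^{n−1} (1/k!) · C^k = X − I_n. -/

import Mathlib

/-!
With `C = XA - AX`, the matrix `X = exp C` commutes with `C`, so
`tr C^(k+1) = tr (C^k X A) - tr (C^k A X) = 0` for all `k`. Over `ℂ` this forces `C` to be
nilpotent: `tr C^k = ∑ μ, m_μ μ^k` with `m_μ ≠ 0` the dimension of the generalised
`μ`-eigenspace, so for every polynomial `p` without constant term `∑ μ, m_μ p(μ) = 0`; taking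
`p = X ∏_{ν ≠ μ} (X - ν)` leaves only `m_μ p(μ)`, hence `μ = 0`. By Cayley–Hamilton `C^n = 0`,
so the exponential series of `C` stops at `k = n - 1`, and `X - 1` is a sum of commuting
nilpotent terms `C^k / k!`.
-/

namespace Finset

open Polynomial

theorem sum_mul_eval_eq_zero_of_sum_mul_pow_eq_zero {K : Type*} [CommRing K] {s : Finset K}
    {w : K → K} (h : ∀ k, 1 ≤ k → ∑ μ ∈ s, w μ * μ ^ k = 0) {p : K[X]} (hp : p.coeff 0 = 0) :
    ∑ μ ∈ s, w μ * p.eval μ = 0 := by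
  simp_rw [p.eval_eq_sum_range, Finset.mul_sum]
  rw [Finset.sum_comm]
  refine Finset.sum_eq_zero fun k _ => ?_
  rcases Nat.eq_zero_or_pos k with rfl | hk
  · simp [hp]
  · rw [← mul_zero (p.coeff k), ← h k hk, Finset.mul_sum]
    exact Finset.sum_congr rfl fun μ _ => by ring

theorem eq_zero_of_sum_mul_pow_eq_zero {K : Type*} [CommRing K] [IsDomain K] {s : Finset K}
    {w : K → K} (hw : ∀ μ ∈ s, w μ ≠ 0)
    (h : ∀ k, 1 ≤ k → ∑ μ ∈ s, w μ * μ ^ k = 0) {μ : K} (hμ : μ ∈ s) : μ = 0 := by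
  classical
  by_contra hμ0
  set p : K[X] := X * ∏ ν ∈ s.erase μ, (X - C ν)
  have hp0 : p.coeff 0 = 0 := by simp [p, coeff_zero_eq_eval_zero]
  have hsingle : ∑ ν ∈ s, w ν * p.eval ν = w μ * p.eval μ := by
    refine Finset.sum_eq_single_of_mem μ hμ fun ν hν hνμ => ?_
    have : p.eval ν = 0 := by
      simp only [p, eval_mul, eval_X, eval_prod, eval_sub, eval_C]
      rw [Finset.prod_eq_zero (Finset.mem_erase.mpr ⟨hνμ, hν⟩) (sub_self ν), mul_zero]
    rw [this, mul_zero]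
  have hpμ : p.eval μ ≠ 0 := by
    simp only [p, eval_mul, eval_X, eval_prod, eval_sub, eval_C]
    exact mul_ne_zero hμ0 (Finset.prod_ne_zero_iff.mpr fun ν hν =>
      sub_ne_zero.mpr (Finset.ne_of_mem_erase hν).symm)
  exact mul_ne_zero (hw μ hμ) hpμ
    (hsingle ▸ sum_mul_eval_eq_zero_of_sum_mul_pow_eq_zero h hp0)

end Finset

namespace Module.End

variable {K V : Type*} [Field K] [AddCommGroup V] [Module K V] [FiniteDimensional K V]

theorem trace_pow_restrict_maxGenEigenspace (f : End K V) (μ : K) (k : ℕ) :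
    LinearMap.trace K _ ((f ^ k).restrict
        (f.mapsTo_maxGenEigenspace_of_comm ((Commute.refl f).pow_right k) μ)) =
      finrank K (f.maxGenEigenspace μ) * μ ^ k := by
  have hf := f.mapsTo_maxGenEigenspace_of_comm (Commute.refl f) μ
  have hnil : IsNilpotent (f.restrict hf - algebraMap K _ μ) := by
    convert f.isNilpotent_restrict_maxGenEigenspace_sub_algebraMap μ using 1
    ext
    rfl
  rw [← pow_restrict k hf]
  induction k with
  | zero => simp
  | succ k ih =>
    rw [pow_succ, mul_eq_comp, LinearMap.trace_comp_eq_mul_of_commute_of_isNilpotent μ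
      ((Commute.refl _).pow_left k) hnil, ih]
    ring

theorem trace_pow_eq_sum_finrank_mul_pow [IsAlgClosed K] (f : End K V) :
    ∃ s : Finset K, (∀ μ, μ ∈ s ↔ f.maxGenEigenspace μ ≠ ⊥) ∧
      ∀ k, LinearMap.trace K V (f ^ k) =
        ∑ μ ∈ s, (finrank K (f.maxGenEigenspace μ) : K) * μ ^ k := by
  classical
  have hfin : {μ | f.maxGenEigenspace μ ≠ ⊥}.Finite :=
    WellFoundedGT.finite_ne_bot_of_iSupIndep f.independent_maxGenEigenspace
  have hint := DirectSum.isInternal_submodule_of_iSupIndep_of_iSup_eq_top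
    f.independent_maxGenEigenspace f.iSup_maxGenEigenspace_eq_top
  refine ⟨hfin.toFinset, fun μ => hfin.mem_toFinset, fun k => ?_⟩
  rw [LinearMap.trace_eq_sum_trace_restrict' hint hfin
    (f.mapsTo_maxGenEigenspace_of_comm ((Commute.refl f).pow_right k))]
  exact Finset.sum_congr rfl fun μ _ => trace_pow_restrict_maxGenEigenspace f μ k

theorem isNilpotent_of_forall_ne_zero_maxGenEigenspace_eq_bot [IsAlgClosed K] {f : End K V}
    (h : ∀ μ, μ ≠ 0 → f.maxGenEigenspace μ = ⊥) : IsNilpotent f := by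
  have htop : f.maxGenEigenspace 0 = ⊤ := by
    rw [eq_top_iff, ← f.iSup_maxGenEigenspace_eq_top]
    refine iSup_le fun μ => ?_
    rcases eq_or_ne μ 0 with rfl | hμ
    · exact le_rfl
    · exact (h μ hμ).symm ▸ bot_le
  refine ((LinearMap.charpoly_nilpotent_tfae f).out 0 2).mpr fun v => ?_
  simpa using (f.mem_maxGenEigenspace 0 v).mp (htop ▸ Submodule.mem_top)

theorem isNilpotent_of_trace_pow_eq_zero [IsAlgClosed K] [CharZero K] {f : End K V}
    (h : ∀ k, 1 ≤ k → LinearMap.trace K V (f ^ k) = 0) : IsNilpotent f := by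
  obtain ⟨s, hs, htr⟩ := f.trace_pow_eq_sum_finrank_mul_pow
  refine isNilpotent_of_forall_ne_zero_maxGenEigenspace_eq_bot fun μ hμ => ?_
  by_contra hne
  refine hμ (Finset.eq_zero_of_sum_mul_pow_eq_zero (fun ν hν => ?_)
    (fun k hk => htr k ▸ h k hk) ((hs μ).mpr hne))
  have : Nontrivial (f.maxGenEigenspace ν) := Submodule.nontrivial_iff_ne_bot.mpr ((hs ν).mp hν)
  exact Nat.cast_ne_zero.mpr finrank_pos.ne'

end Module.End

namespace Matrix

theorem isNilpotent_of_trace_pow_eq_zero {K n : Type*} [Field K] [IsAlgClosed K] [CharZero K]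
    [Fintype n] [DecidableEq n] {M : Matrix n n K} (h : ∀ k, 1 ≤ k → trace (M ^ k) = 0) :
    IsNilpotent M := by
  rw [← IsNilpotent.map_iff (toLinAlgEquiv' (R := K) (n := n)).injective]
  refine Module.End.isNilpotent_of_trace_pow_eq_zero fun k hk => ?_
  rw [← map_pow]
  exact (trace_toLin'_eq _).trans (h k hk)

theorem trace_pow_commutator_eq_zero_of_commute {R n : Type*} [CommRing R] [Fintype n]
    [DecidableEq n] {X A : Matrix n n R} (hX : Commute X (X * A - A * X)) {k : ℕ} (hk : 1 ≤ k) :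
    trace ((X * A - A * X) ^ k) = 0 := by
  obtain ⟨m, rfl⟩ := Nat.exists_eq_add_of_le' hk
  set C := X * A - A * X
  have hCX : C ^ m * X = X * C ^ m := ((hX.symm).pow_left m).eq
  calc trace (C ^ (m + 1)) = trace (C ^ m * X * A) - trace (C ^ m * A * X) := by
        rw [pow_succ, mul_sub, trace_sub, mul_assoc, mul_assoc]
    _ = 0 := by rw [hCX, mul_assoc, trace_mul_comm X, mul_assoc, sub_self]

theorem isNilpotent_commutator_of_commute {K n : Type*} [Field K] [IsAlgClosed K] [CharZero K]
    [Fintype n] [DecidableEq n] {X A : Matrix n n K} (hX : Commute X (X * A - A * X)) :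
    IsNilpotent (X * A - A * X) :=
  isNilpotent_of_trace_pow_eq_zero fun _ hk => trace_pow_commutator_eq_zero_of_commute hX hk

theorem pow_card_eq_zero_of_isNilpotent {R n : Type*} [CommRing R] [IsDomain R] [Fintype n]
    [DecidableEq n] {M : Matrix n n R} (hM : IsNilpotent M) : M ^ Fintype.card n = 0 := by
  have hchar : M.charpoly = Polynomial.X ^ Fintype.card n :=
    sub_eq_zero.mp (isNilpotent_charpoly_sub_pow_of_isNilpotent hM).eq_zero
  simpa [hchar] using M.aeval_self_charpoly

end Matrix

namespace NormedSpace

theorem exp_eq_sum_range_of_pow_eq_zero (𝕂 : Type*) {𝔸 : Type*} [Field 𝕂] [CharZero 𝕂]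
    [Ring 𝔸] [Algebra 𝕂 𝔸] [TopologicalSpace 𝔸] [IsTopologicalRing 𝔸] {a : 𝔸} {N : ℕ}
    (ha : a ^ N = 0) :
    exp a = ∑ k ∈ Finset.range N, (k.factorial⁻¹ : 𝕂) • a ^ k := by
  rw [exp_eq_tsum 𝕂]
  refine tsum_eq_sum fun k hk => ?_
  rw [pow_eq_zero_of_le (by simpa using hk) ha, smul_zero]

end NormedSpace

theorem stmt16 (n : ℕ) (hn : 1 ≤ n) (A X : Matrix (Fin n) (Fin n) ℂ)
    (h : NormedSpace.exp (X * A - A * X) = X) :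
    IsNilpotent (X * A - A * X) ∧
    IsNilpotent (X - (1 : Matrix (Fin n) (Fin n) ℂ)) ∧
    ∑ k ∈ Finset.Icc 1 (n - 1), ((1 : ℂ) / (Nat.factorial k : ℂ)) • (X * A - A * X) ^ k =
      X - (1 : Matrix (Fin n) (Fin n) ℂ) := by
  set C := X * A - A * X
  have hXC : Commute X C := h ▸ (Commute.refl C).exp_left
  have hC : IsNilpotent C := Matrix.isNilpotent_commutator_of_commute hXC
  have hCn : C ^ n = 0 := by simpa using Matrix.pow_card_eq_zero_of_isNilpotent hC
  have hsum : ∑ k ∈ Finset.Icc 1 (n - 1), ((1 : ℂ) / k.factorial) • C ^ k = X - 1 := by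
    rw [← h, NormedSpace.exp_eq_sum_range_of_pow_eq_zero ℂ hCn, Finset.range_eq_Ico,
      Finset.sum_eq_sum_Ico_succ_bot hn, Finset.Icc_sub_one_right_eq_Ico_of_not_isMin
      (not_isMin_of_lt hn)]
    simp [one_div]
  refine ⟨hC, hsum ▸ Commute.isNilpotent_sum (fun k hk => ?_) fun i j _ _ => ?_, hsum⟩
  · exact (hC.pow_of_pos (Nat.one_le_iff_ne_zero.mp (Finset.mem_Icc.mp hk).1)).smul _
  · exact (((Commute.refl C).pow_pow i j).smul_left _).smul_right _
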